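/- arXiv:math/0504314 — 4 statements merged into one kernel-verified Lean document; each statement's English description precedes it below -/
import Mathlib

section
/- Let n ≥ 0 and let M be a real symmetric (n+1)×(n+1) matrix, with rows and columns indexed by 0, 1, …, n. Assume that the n×n principal submatrix of M obtained by deleting row 0 and column 0 is negative definite, and that there exists a vector v ∈ ℝ^{n+1} with vᵀMv > 0. Then (−1)ⁿ·det(M) > 0; that is, det(M) > 0 if n is even and det(M) < 0 if n is odd. -/
/-!
Pass to `P = -M` with the index `0` moved to the end. The leading block of `P` is positive
definite, so by the Schur complement criterion `P` is positive semidefinite iff its `1 × 1` Schur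
complement `s` is nonnegative. The vector `v` shows that `P` is not positive semidefinite, hence
`s < 0` and `det P = det (leading block) * s < 0`. Finally `det P = (-1) ^ (n + 1) * det M`.
-/

open Matrix

namespace Matrix

theorem posSemidef_of_unique {κ : Type*} [Unique κ] {S : Matrix κ κ ℝ}
    (h : 0 ≤ S default default) : S.PosSemidef := by
  refine posSemidef_iff_dotProduct_mulVec.mpr ⟨?_, fun x => ?_⟩
  · ext i j
    simp [Subsingleton.elim i j]
  · simpa [dotProduct, mulVec, mul_left_comm] using mul_nonneg h (mul_self_nonneg (x default))

theorem det_neg_of_posDef_toBlocks₁₁ {ι : Type*} [Fintype ι] [DecidableEq ι]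
    {P : Matrix (ι ⊕ Unit) (ι ⊕ Unit) ℝ} (hP : P.IsHermitian) (h₁₁ : P.toBlocks₁₁.PosDef)
    (hP_not : ¬P.PosSemidef) : P.det < 0 := by
  have hblocks : P = fromBlocks P.toBlocks₁₁ P.toBlocks₁₂ P.toBlocks₁₂ᴴ P.toBlocks₂₂ := by
    rw [← fromBlocks_toBlocks P] at hP
    rw [(isHermitian_fromBlocks_iff.mp hP).2.1, fromBlocks_toBlocks]
  have := h₁₁.isUnit.invertible
  have hSchur : (P.toBlocks₂₂ - P.toBlocks₁₂ᴴ * P.toBlocks₁₁⁻¹ * P.toBlocks₁₂) () () < 0 := by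
    by_contra! h
    rw [hblocks, PosDef.fromBlocks₁₁ _ _ h₁₁] at hP_not
    exact hP_not (posSemidef_of_unique h)
  rw [hblocks, det_fromBlocks₁₁, invOf_eq_nonsing_inv, det_unique (_ - _)]
  exact mul_neg_of_pos_of_neg h₁₁.det_pos hSchur

end Matrix

/-- If the principal submatrix of a real symmetric `(n+1)×(n+1)` matrix `M`
obtained by deleting row and column `0` is negative definite, and some vector has positive
`M`-self-intersection, then `(-1)^n * det M > 0`. -/
theorem det_sign_of_negDef_submatrix (n : ℕ)
    (M : Matrix (Fin (n + 1)) (Fin (n + 1)) ℝ)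
    (hsymm : M.IsSymm)
    (hnegdef : ∀ x : Fin n → ℝ, x ≠ 0 →
      x ⬝ᵥ (M.submatrix Fin.succ Fin.succ).mulVec x < 0)
    (hpos : ∃ v : Fin (n + 1) → ℝ, 0 < v ⬝ᵥ M.mulVec v) :
    0 < (-1 : ℝ) ^ n * M.det := by
  let e : Fin (n + 1) ≃ Fin n ⊕ Unit := (finSuccEquiv n).trans (Equiv.optionEquivSumPUnit _)
  let P := (-M).submatrix e.symm e.symm
  have hP : P.IsHermitian := (isHermitian_iff_isSymm.mpr hsymm).neg.submatrix _
  have h₁₁ : P.toBlocks₁₁.PosDef := by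
    have hblock : P.toBlocks₁₁ = -M.submatrix Fin.succ Fin.succ := by
      ext i j
      simp [P, e, toBlocks₁₁]
    rw [hblock]
    refine posDef_iff_dotProduct_mulVec.mpr ⟨?_, fun x hx => ?_⟩
    · exact ((isHermitian_iff_isSymm.mpr hsymm).submatrix _).neg
    · simpa [neg_mulVec] using hnegdef x hx
  have hP_not : ¬P.PosSemidef := by
    rw [posSemidef_submatrix_equiv]
    obtain ⟨v, hv⟩ := hpos
    intro h
    have := (posSemidef_iff_dotProduct_mulVec.mp h).2 v
    simp only [star_trivial, neg_mulVec, dotProduct_neg] at this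
    linarith
  have hdet : P.det = -((-1) ^ n * M.det) := by
    rw [det_submatrix_equiv_self, det_neg, Fintype.card_fin, pow_succ]
    ring
  linarith [det_neg_of_posDef_toBlocks₁₁ hP h₁₁ hP_not]
end

section
/- Let M be a real symmetric n×n negative definite matrix such that M_{ij} ≥ 0 for all i ≠ j. If y ∈ ℝⁿ satisfies (My)_j ≤ 0 for every index j, then y_i ≥ 0 for every index i. -/
open Matrix

/-- comparison principle for negative definite symmetric matrices with
nonnegative off-diagonal entries: if `(M y)_j ≤ 0` for all `j`, then `y ≥ 0`. -/
theorem nonneg_of_mulVec_nonpos (n : ℕ)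
    (M : Matrix (Fin n) (Fin n) ℝ)
    (hsymm : M.IsSymm)
    (hnegdef : ∀ x : Fin n → ℝ, x ≠ 0 → x ⬝ᵥ M.mulVec x < 0)
    (hoff : ∀ i j : Fin n, i ≠ j → 0 ≤ M i j)
    (y : Fin n → ℝ)
    (hy : ∀ j : Fin n, M.mulVec y j ≤ 0) :
    ∀ i : Fin n, 0 ≤ y i := by
  set b : Fin n → ℝ := fun i => max (-y i) 0 with hb
  set a : Fin n → ℝ := fun i => max (y i) 0 with ha
  have hab : a = y + b := by
    funext i
    simp only [ha, hb, Pi.add_apply]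
    rcases le_total (y i) 0 with h | h
    · rw [max_eq_right h, max_eq_left (by linarith : (0:ℝ) ≤ -y i)]; ring
    · rw [max_eq_left h, max_eq_right (by linarith : -y i ≤ 0)]; ring
  have hbnn : ∀ i, 0 ≤ b i := fun i => le_max_right _ _
  have hann : ∀ i, 0 ≤ a i := fun i => le_max_right _ _
  have hdisj : ∀ i, b i * a i = 0 := by
    intro i
    rcases le_total (y i) 0 with h | h
    · simp [ha, max_eq_right h]
    · simp [hb, max_eq_right (by linarith : -y i ≤ 0)]
  have h1 : b ⬝ᵥ M.mulVec y ≤ 0 := by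
    apply Finset.sum_nonpos
    intro j _
    exact mul_nonpos_of_nonneg_of_nonpos (hbnn j) (hy j)
  have h2 : 0 ≤ b ⬝ᵥ M.mulVec a := by
    simp only [dotProduct, Matrix.mulVec, Finset.mul_sum]
    apply Finset.sum_nonneg
    intro i _
    apply Finset.sum_nonneg
    intro j _
    rcases eq_or_ne i j with rfl | hij
    · rw [show b i * (M i i * a i) = M i i * (b i * a i) from by ring, hdisj i, mul_zero]
    · exact mul_nonneg (hbnn i) (mul_nonneg (hoff i j hij) (hann j))
  have hbb : 0 ≤ b ⬝ᵥ M.mulVec b := by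
    have hlin : b ⬝ᵥ M.mulVec a = b ⬝ᵥ M.mulVec y + b ⬝ᵥ M.mulVec b := by
      rw [hab, Matrix.mulVec_add, dotProduct_add]
    linarith
  have hb0 : b = 0 := by
    by_contra h
    exact absurd hbb (not_le.mpr (hnegdef b h))
  intro i
  have hzero : b i = 0 := congrFun hb0 i
  have hle : -y i ≤ b i := le_max_left _ _
  rw [hzero] at hle
  linarith
end

section
/- Let G be a finite simple tree graph with integer vertex weights w_i ≤ −2, with associated symmetric matrix M (M_{ii} = w_i; M_{ij} = 1 if i, j adjacent, 0 otherwise for i ≠ j), and suppose G, together with the positive integer multiplicities δ described below, is one of the following affine configurations: (Iₙ*, n ≥ 0) a path c₀, …, cₙ with two extra leaves attached to c₀ and two extra leaves attached to cₙ (for n = 0, a single central vertex with four leaves); multiplicities: 2 on each c_i and 1 on each leaf; (II*) a path v₁, …, v₈ with one extra leaf attached to v₆; multiplicities 1,2,3,4,5,6,4,2 along the path and 3 on the leaf; (III*) a path v₁, …, v₇ with one extra leaf attached to v₄; multiplicities 1,2,3,4,3,2,1 along the path and 2 on the leaf; (IV*) a central vertex with three paths of two vertices each attached; multiplicities: 3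 on the center, 2 on each vertex adjacent to the center, 1 on each tip. Then: (1) if w_i = −2 for every vertex i, the matrix M is negative semi-definite and Mδ = 0, where δ is the vector of multiplicities; (2) if w_i ≤ −2 for every i and w_j < −2 for at least one j, then M is negative definite. -/
open Matrix Finset

private lemma sum_val_eq {N : ℕ} (c : ℕ) (hc : c < N) (f : Fin N → ℝ) :
    ∑ j : Fin N, (if (j : ℕ) = c then f j else 0) = f ⟨c, hc⟩ := by
  rw [show (∑ j : Fin N, (if (j : ℕ) = c then f j else 0))
      = ∑ j : Fin N, (if j = ⟨c, hc⟩ then f j else 0) from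
    Finset.sum_congr rfl (fun j _ => by simp [Fin.ext_iff])]
  simp

private lemma ite_or_add {p q : Prop} [Decidable p] [Decidable q] (h : ¬(p ∧ q)) (x : ℝ) :
    (if p ∨ q then x else 0) = (if p then x else 0) + (if q then x else 0) := by
  by_cases hp : p <;> by_cases hq : q
  · exact absurd ⟨hp, hq⟩ h
  all_goals simp [hp, hq]

private lemma sum_ind1 {N : ℕ} (P : Fin N → Prop) [DecidablePred P] (f : Fin N → ℝ)
    (c₁ : ℕ) (h₁ : c₁ < N) (h : ∀ j : Fin N, P j ↔ (j : ℕ) = c₁) :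
    ∑ j : Fin N, (if P j then f j else 0) = f ⟨c₁, h₁⟩ := by
  rw [← sum_val_eq c₁ h₁ f]
  exact Finset.sum_congr rfl fun j _ => by rw [if_congr (h j) rfl rfl]

private lemma sum_ind2 {N : ℕ} (P : Fin N → Prop) [DecidablePred P] (f : Fin N → ℝ)
    (c₁ c₂ : ℕ) (h₁ : c₁ < N) (h₂ : c₂ < N) (d₁₂ : c₁ ≠ c₂)
    (h : ∀ j : Fin N, P j ↔ ((j : ℕ) = c₁ ∨ (j : ℕ) = c₂)) :
    ∑ j : Fin N, (if P j then f j else 0) = f ⟨c₁, h₁⟩ + f ⟨c₂, h₂⟩ := by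
  have e : ∀ j : Fin N, (if P j then f j else 0)
      = (if (j:ℕ) = c₁ then f j else 0) + (if (j:ℕ) = c₂ then f j else 0) := fun j => by
    rw [if_congr (h j) rfl rfl, ite_or_add (by omega)]
  rw [Finset.sum_congr rfl fun j _ => e j, Finset.sum_add_distrib,
    sum_val_eq c₁ h₁, sum_val_eq c₂ h₂]

private lemma sum_ind3 {N : ℕ} (P : Fin N → Prop) [DecidablePred P] (f : Fin N → ℝ)
    (c₁ c₂ c₃ : ℕ) (h₁ : c₁ < N) (h₂ : c₂ < N) (h₃ : c₃ < N)
    (d₁₂ : c₁ ≠ c₂) (d₁₃ : c₁ ≠ c₃) (d₂₃ : c₂ ≠ c₃)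
    (h : ∀ j : Fin N, P j ↔ ((j : ℕ) = c₁ ∨ (j : ℕ) = c₂ ∨ (j : ℕ) = c₃)) :
    ∑ j : Fin N, (if P j then f j else 0) = f ⟨c₁, h₁⟩ + f ⟨c₂, h₂⟩ + f ⟨c₃, h₃⟩ := by
  have e : ∀ j : Fin N, (if P j then f j else 0)
      = (if (j:ℕ) = c₁ then f j else 0) + ((if (j:ℕ) = c₂ then f j else 0)
        + (if (j:ℕ) = c₃ then f j else 0)) := fun j => by
    rw [if_congr (h j) rfl rfl, ite_or_add (by omega), ite_or_add (by omega)]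
  rw [Finset.sum_congr rfl fun j _ => e j, Finset.sum_add_distrib, Finset.sum_add_distrib,
    sum_val_eq c₁ h₁, sum_val_eq c₂ h₂, sum_val_eq c₃ h₃, add_assoc]

private lemma sum_ind4 {N : ℕ} (P : Fin N → Prop) [DecidablePred P] (f : Fin N → ℝ)
    (c₁ c₂ c₃ c₄ : ℕ) (h₁ : c₁ < N) (h₂ : c₂ < N) (h₃ : c₃ < N) (h₄ : c₄ < N)
    (d₁₂ : c₁ ≠ c₂) (d₁₃ : c₁ ≠ c₃) (d₁₄ : c₁ ≠ c₄) (d₂₃ : c₂ ≠ c₃) (d₂₄ : c₂ ≠ c₄)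
    (d₃₄ : c₃ ≠ c₄)
    (h : ∀ j : Fin N, P j ↔ ((j : ℕ) = c₁ ∨ (j : ℕ) = c₂ ∨ (j : ℕ) = c₃ ∨ (j : ℕ) = c₄)) :
    ∑ j : Fin N, (if P j then f j else 0)
      = f ⟨c₁, h₁⟩ + f ⟨c₂, h₂⟩ + f ⟨c₃, h₃⟩ + f ⟨c₄, h₄⟩ := by
  have e : ∀ j : Fin N, (if P j then f j else 0)
      = (if (j:ℕ) = c₁ then f j else 0) + ((if (j:ℕ) = c₂ then f j else 0)
        + ((if (j:ℕ) = c₃ then f j else 0) + (if (j:ℕ) = c₄ then f j else 0))) := fun j => by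
    rw [if_congr (h j) rfl rfl, ite_or_add (by omega), ite_or_add (by omega),
      ite_or_add (by omega)]
  rw [Finset.sum_congr rfl fun j _ => e j, Finset.sum_add_distrib, Finset.sum_add_distrib,
    Finset.sum_add_distrib, sum_val_eq c₁ h₁, sum_val_eq c₂ h₂, sum_val_eq c₃ h₃,
    sum_val_eq c₄ h₄]
  ring

private lemma sum_antisym {N : ℕ} (F : Fin N → Fin N → ℝ) (h : ∀ i j, F i j = - F j i) :
    (∑ i, ∑ j, F i j) = 0 := by
  have h1 : (∑ i, ∑ j, F i j) = ∑ j, ∑ i, F i j := Finset.sum_comm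
  have h2 : (∑ j : Fin N, ∑ i : Fin N, F i j) = - ∑ j : Fin N, ∑ i : Fin N, F j i := by
    rw [← Finset.sum_neg_distrib]
    exact Finset.sum_congr rfl fun j _ => by
      rw [← Finset.sum_neg_distrib]
      exact Finset.sum_congr rfl fun i _ => h i j
  have := h1.trans h2
  linarith

private lemma quad_id {N : ℕ} (M : Matrix (Fin N) (Fin N) ℝ) (hsym : ∀ i j, M i j = M j i)
    (δ : Fin N → ℝ) (hδ : ∀ i, δ i ≠ 0) (x : Fin N → ℝ) :
    x ⬝ᵥ M.mulVec x =
      (∑ i, M.mulVec δ i * (x i)^2 / δ i)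
        - ∑ i, ∑ j, M i j * δ i * δ j * (x i / δ i - x j / δ j)^2 / 2 := by
  have key : (∑ i, ∑ j, ((M i j * δ j * (x i)^2 / δ i
      - M i j * δ i * δ j * (x i / δ i - x j / δ j)^2 / 2) - x i * (M i j * x j))) = 0 := by
    apply sum_antisym
    intro i j
    have hi := hδ i
    have hj := hδ j
    rw [← hsym i j]
    field_simp
    ring
  have hL : x ⬝ᵥ M.mulVec x = ∑ i, ∑ j, x i * (M i j * x j) := by
    simp [dotProduct, Matrix.mulVec, Finset.mul_sum]
  have hR1 : (∑ i, M.mulVec δ i * (x i)^2 / δ i)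
      = ∑ i, ∑ j, M i j * δ j * (x i)^2 / δ i := by
    refine Finset.sum_congr rfl fun i _ => ?_
    simp [Matrix.mulVec, dotProduct, Finset.sum_mul, Finset.sum_div]
  simp only [Finset.sum_sub_distrib] at key
  rw [hL, hR1]
  linarith

private lemma form_nonpos {N : ℕ} (M : Matrix (Fin N) (Fin N) ℝ) (hsym : ∀ i j, M i j = M j i)
    (hoff : ∀ i j, i ≠ j → 0 ≤ M i j) (δ : Fin N → ℝ) (hδ : ∀ i, 0 < δ i)
    (hMδ : ∀ i, M.mulVec δ i ≤ 0) (x : Fin N → ℝ) :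
    x ⬝ᵥ M.mulVec x ≤ 0 := by
  rw [quad_id M hsym δ (fun i => (hδ i).ne') x]
  have h1 : (∑ i, M.mulVec δ i * (x i)^2 / δ i) ≤ 0 :=
    Finset.sum_nonpos fun i _ => div_nonpos_of_nonpos_of_nonneg
      (mul_nonpos_of_nonpos_of_nonneg (hMδ i) (sq_nonneg _)) (hδ i).le
  have h2 : 0 ≤ ∑ i, ∑ j, M i j * δ i * δ j * (x i / δ i - x j / δ j)^2 / 2 := by
    refine Finset.sum_nonneg fun i _ => Finset.sum_nonneg fun j _ => ?_
    rcases eq_or_ne i j with rfl | hne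
    · simp
    · exact div_nonneg (mul_nonneg (mul_nonneg (mul_nonneg (hoff i j hne) (hδ i).le)
        (hδ j).le) (sq_nonneg _)) (by norm_num)
  linarith

private lemma form_neg {N : ℕ} (G : SimpleGraph (Fin N)) [DecidableRel G.Adj]
    (hc : G.Preconnected) (w : Fin N → ℝ) (δ : Fin N → ℝ) (hδ : ∀ i, 0 < δ i)
    (hMδ : ∀ i, Matrix.mulVec
      (fun i j : Fin N => if i = j then w i else if G.Adj i j then 1 else 0) δ i ≤ 0)
    (j₀ : Fin N) (hj₀ : Matrix.mulVec
      (fun i j : Fin N => if i = j then w i else if G.Adj i j then 1 else 0) δ j₀ < 0)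
    (x : Fin N → ℝ) (hx : x ≠ 0) :
    x ⬝ᵥ Matrix.mulVec
      (fun i j : Fin N => if i = j then w i else if G.Adj i j then 1 else 0) x < 0 := by
  set M : Matrix (Fin N) (Fin N) ℝ :=
    fun i j : Fin N => if i = j then w i else if G.Adj i j then 1 else 0 with hM
  have hsym : ∀ i j, M i j = M j i := by
    intro i j
    rcases eq_or_ne i j with rfl | h
    · rfl
    · simp only [hM, if_neg h, if_neg h.symm, G.adj_comm i j]
  have hoff : ∀ i j, i ≠ j → 0 ≤ M i j := by
    intro i j h
    simp only [hM, if_neg h]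
    split <;> norm_num
  rw [quad_id M hsym δ (fun i => (hδ i).ne') x]
  have h1 : (∑ i, M.mulVec δ i * (x i)^2 / δ i) ≤ 0 :=
    Finset.sum_nonpos fun i _ => div_nonpos_of_nonpos_of_nonneg
      (mul_nonpos_of_nonpos_of_nonneg (hMδ i) (sq_nonneg _)) (hδ i).le
  have h2inner : ∀ i j, 0 ≤ M i j * δ i * δ j * (x i / δ i - x j / δ j)^2 / 2 := by
    intro i j
    rcases eq_or_ne i j with rfl | hne
    · simp
    · exact div_nonneg (mul_nonneg (mul_nonneg (mul_nonneg (hoff i j hne) (hδ i).le)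
        (hδ j).le) (sq_nonneg _)) (by norm_num)
  have h2each : ∀ i ∈ (univ : Finset (Fin N)), 0 ≤ ∑ j,
      M i j * δ i * δ j * (x i / δ i - x j / δ j)^2 / 2 := fun i _ =>
    Finset.sum_nonneg fun j _ => h2inner i j
  have h2 : 0 ≤ ∑ i, ∑ j, M i j * δ i * δ j * (x i / δ i - x j / δ j)^2 / 2 :=
    Finset.sum_nonneg h2each
  by_contra hcon
  push_neg at hcon
  have hS1 : (∑ i, M.mulVec δ i * (x i)^2 / δ i) = 0 := le_antisymm h1 (by linarith)
  have hS2 : (∑ i, ∑ j, M i j * δ i * δ j * (x i / δ i - x j / δ j)^2 / 2) = 0 :=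
    le_antisymm (by linarith) h2
  have ht1 := (Finset.sum_eq_zero_iff_of_nonpos (fun i _ => div_nonpos_of_nonpos_of_nonneg
      (mul_nonpos_of_nonpos_of_nonneg (hMδ i) (sq_nonneg _)) (hδ i).le)).mp hS1
      j₀ (mem_univ _)
  have hxj0 : x j₀ = 0 := by
    have hd : M.mulVec δ j₀ * x j₀ ^ 2 = 0 := by
      rcases div_eq_zero_iff.mp ht1 with h | h
      · exact h
      · exact absurd h (hδ j₀).ne'
    rcases mul_eq_zero.mp hd with h | h
    · exact absurd h hj₀.ne
    · exact pow_eq_zero_iff (by norm_num) |>.mp h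
  have ht2 := (Finset.sum_eq_zero_iff_of_nonneg h2each).mp hS2
  have hedge : ∀ i j, G.Adj i j → x i / δ i = x j / δ j := by
    intro i j hadj
    have hne : i ≠ j := G.ne_of_adj hadj
    have hz := (Finset.sum_eq_zero_iff_of_nonneg (fun j _ => h2inner i j)).mp
      (ht2 i (mem_univ _)) j (mem_univ _)
    have hMij : M i j = 1 := by simp [hM, if_neg hne, hadj]
    rw [hMij] at hz
    have hsq : (x i / δ i - x j / δ j)^2 = 0 := by
      have hne1 : (1:ℝ) * δ i * δ j ≠ 0 := by
        simp [(hδ i).ne', (hδ j).ne']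
      rcases div_eq_zero_iff.mp hz with h | h
      · rcases mul_eq_zero.mp h with h' | h'
        · exact absurd h' hne1
        · exact h'
      · norm_num at h
    have := pow_eq_zero_iff (n := 2) (by norm_num) |>.mp hsq
    linarith [sub_eq_zero.mp this]
  have hwalk : ∀ (u v : Fin N) (_ : G.Walk u v), x u / δ u = x v / δ v := by
    intro u v p
    induction p with
    | nil => rfl
    | cons h p ih => exact (hedge _ _ h).trans ih
  apply hx
  funext i
  have hdiv := hwalk j₀ i (hc j₀ i).some
  rw [hxj0, zero_div] at hdiv
  have : x i = 0 := by
    rcases div_eq_zero_iff.mp hdiv.symm with h | h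
    · exact h
    · exact absurd h (hδ i).ne'
  simpa using this



/-- for a weighted tree (weights `≤ -2`) of affine type `Iₙ*`, `II*`, `III*`
or `IV*` with the standard Kodaira multiplicities `δ`:
(1) if all weights are `-2`, the associated matrix is negative semi-definite and kills `δ`;
(2) if some weight is `< -2`, the associated matrix is negative definite. -/
theorem affine_tree_semidef_or_negdef (N : ℕ)
    (G : SimpleGraph (Fin N)) [DecidableRel G.Adj] (hT : G.IsTree)
    (w : Fin N → ℤ) (hw : ∀ i, w i ≤ -2) (δ : Fin N → ℕ) (hδ : ∀ i, 0 < δ i)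
    (hconf :
      -- type Iₙ* (n ≥ 0): a path c₀,…,cₙ (indices 0,…,n), two leaves (n+1, n+2)
      -- attached to c₀ and two leaves (n+3, n+4) attached to cₙ;
      -- multiplicities 2 on the path, 1 on the leaves
      (∃ n : ℕ, N = n + 5 ∧
        (∀ i j : Fin N, G.Adj i j ↔
          ((i.val + 1 = j.val ∧ j.val ≤ n) ∨ (j.val + 1 = i.val ∧ i.val ≤ n) ∨
            ((i.val = n + 1 ∨ i.val = n + 2) ∧ j.val = 0) ∨
            ((j.val = n + 1 ∨ j.val = n + 2) ∧ i.val = 0) ∨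
            ((i.val = n + 3 ∨ i.val = n + 4) ∧ j.val = n) ∨
            ((j.val = n + 3 ∨ j.val = n + 4) ∧ i.val = n))) ∧
        (∀ i : Fin N, δ i = if i.val ≤ n then 2 else 1)) ∨
      -- type II*: a path v₁,…,v₈ (indices 0,…,7) with a leaf (index 8) attached to v₆
      -- (index 5); multiplicities 1,2,3,4,5,6,4,2 along the path and 3 on the leaf
      (N = 9 ∧
        (∀ i j : Fin N, G.Adj i j ↔
          ((i.val + 1 = j.val ∧ j.val ≤ 7) ∨ (j.val + 1 = i.val ∧ i.val ≤ 7) ∨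
            (i.val = 8 ∧ j.val = 5) ∨ (j.val = 8 ∧ i.val = 5))) ∧
        (∀ i : Fin N, δ i = ([1, 2, 3, 4, 5, 6, 4, 2, 3] : List ℕ).getD i.val 0)) ∨
      -- type III*: a path v₁,…,v₇ (indices 0,…,6) with a leaf (index 7) attached to v₄
      -- (index 3); multiplicities 1,2,3,4,3,2,1 along the path and 2 on the leaf
      (N = 8 ∧
        (∀ i j : Fin N, G.Adj i j ↔
          ((i.val + 1 = j.val ∧ j.val ≤ 6) ∨ (j.val + 1 = i.val ∧ i.val ≤ 6) ∨
            (i.val = 7 ∧ j.val = 3) ∨ (j.val = 7 ∧ i.val = 3))) ∧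
        (∀ i : Fin N, δ i = ([1, 2, 3, 4, 3, 2, 1, 2] : List ℕ).getD i.val 0)) ∨
      -- type IV*: a central vertex (index 0) with three paths of two vertices each
      -- attached (1-2, 3-4, 5-6); multiplicities 3 on the centre, 2 on the vertices
      -- adjacent to the centre, 1 on the tips
      (N = 7 ∧
        (∀ i j : Fin N, G.Adj i j ↔
          ((i.val = 0 ∧ (j.val = 1 ∨ j.val = 3 ∨ j.val = 5)) ∨
            (j.val = 0 ∧ (i.val = 1 ∨ i.val = 3 ∨ i.val = 5)) ∨
            (i.val = 1 ∧ j.val = 2) ∨ (j.val = 1 ∧ i.val = 2) ∨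
            (i.val = 3 ∧ j.val = 4) ∨ (j.val = 3 ∧ i.val = 4) ∨
            (i.val = 5 ∧ j.val = 6) ∨ (j.val = 5 ∧ i.val = 6))) ∧
        (∀ i : Fin N, δ i = ([3, 2, 1, 2, 1, 2, 1] : List ℕ).getD i.val 0))) :
    ((∀ i, w i = -2) →
      (∀ x : Fin N → ℝ,
        x ⬝ᵥ (Matrix.mulVec
          (fun i j : Fin N => if i = j then (w i : ℝ) else if G.Adj i j then 1 else 0) x) ≤ 0) ∧
      Matrix.mulVec
        (fun i j : Fin N => if i = j then (w i : ℝ) else if G.Adj i j then 1 else 0)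
        (fun i => (δ i : ℝ)) = 0) ∧
    ((∃ j, w j < -2) →
      ∀ x : Fin N → ℝ, x ≠ 0 →
        x ⬝ᵥ (Matrix.mulVec
          (fun i j : Fin N => if i = j then (w i : ℝ) else if G.Adj i j then 1 else 0) x) < 0) := by
  
  classical
  have hδpos : ∀ i, (0:ℝ) < (δ i : ℝ) := fun i => by exact_mod_cast hδ i
  set M : Matrix (Fin N) (Fin N) ℝ :=
    fun i j : Fin N => if i = j then (w i : ℝ) else if G.Adj i j then 1 else 0 with hMdef
  have hsym : ∀ i j, M i j = M j i := by
    intro i j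
    rcases eq_or_ne i j with rfl | h
    · rfl
    · simp only [hMdef, if_neg h, if_neg h.symm, G.adj_comm i j]
  have hoff : ∀ i j, i ≠ j → 0 ≤ M i j := by
    intro i j h
    simp only [hMdef, if_neg h]
    split <;> norm_num
  have hnsum : ∀ i, (∑ j, (if G.Adj i j then (δ j : ℝ) else 0)) = 2 * (δ i : ℝ) := by
    rcases hconf with ⟨n, hN, hadj, hδv⟩ | ⟨hN, hadj, hδv⟩ | ⟨hN, hadj, hδv⟩ | ⟨hN, hadj, hδv⟩
    · -- type Iₙ*
      subst hN
      intro i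
      have hi5 : i.val < n + 5 := i.isLt
      have hc : (i.val = 0 ∧ n = 0) ∨ (i.val = 0 ∧ 1 ≤ n) ∨ (0 < i.val ∧ i.val < n) ∨
          (i.val = n ∧ 1 ≤ n) ∨ (i.val = n+1 ∨ i.val = n+2) ∨
          (i.val = n+3 ∨ i.val = n+4) := by omega
      rcases hc with ⟨h1,h2⟩|⟨h1,h2⟩|⟨h1,h2⟩|⟨h1,h2⟩|h1|h1
      · rw [sum_ind4 _ _ 1 2 3 4 (by omega) (by omega) (by omega) (by omega) (by omega)
          (by omega) (by omega) (by omega) (by omega) (by omega)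
          (fun j => by rw [hadj i j]; omega)]
        simp only [hδv, h1]
        split_ifs <;> first | (exfalso; omega) | (push_cast; norm_num)
      · rw [sum_ind3 _ _ 1 (n+1) (n+2) (by omega) (by omega) (by omega) (by omega)
          (by omega) (by omega) (fun j => by rw [hadj i j]; omega)]
        simp only [hδv, h1]
        split_ifs <;> first | (exfalso; omega) | (push_cast; norm_num)
      · rw [sum_ind2 _ _ (i.val - 1) (i.val + 1) (by omega) (by omega) (by omega)
          (fun j => by rw [hadj i j]; omega)]
        simp only [hδv]
        split_ifs <;> first | (exfalso; omega) | (push_cast; norm_num)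
      · rw [sum_ind3 _ _ (n-1) (n+3) (n+4) (by omega) (by omega) (by omega) (by omega)
          (by omega) (by omega) (fun j => by rw [hadj i j]; omega)]
        simp only [hδv, h1]
        split_ifs <;> first | (exfalso; omega) | (push_cast; norm_num)
      · rw [sum_ind1 _ _ 0 (by omega) (fun j => by rw [hadj i j]; omega)]
        simp only [hδv]
        split_ifs <;> first | (exfalso; omega) | (push_cast; norm_num)
      · rw [sum_ind1 _ _ n (by omega) (fun j => by rw [hadj i j]; omega)]
        simp only [hδv]
        split_ifs <;> first | (exfalso; omega) | (push_cast; norm_num)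
    · -- type II*
      subst hN
      intro i
      have hc : i.val = 0 ∨ i.val = 1 ∨ i.val = 2 ∨ i.val = 3 ∨ i.val = 4 ∨ i.val = 5 ∨
          i.val = 6 ∨ i.val = 7 ∨ i.val = 8 := by omega
      rcases hc with h1|h1|h1|h1|h1|h1|h1|h1|h1
      · rw [sum_ind1 _ _ 1 (by omega) (fun j => by rw [hadj i j]; omega)]
        simp only [hδv, h1]; norm_num
      · rw [sum_ind2 _ _ 0 2 (by omega) (by omega) (by omega)
          (fun j => by rw [hadj i j]; omega)]
        simp only [hδv, h1]; norm_num
      · rw [sum_ind2 _ _ 1 3 (by omega) (by omega) (by omega)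
          (fun j => by rw [hadj i j]; omega)]
        simp only [hδv, h1]; norm_num
      · rw [sum_ind2 _ _ 2 4 (by omega) (by omega) (by omega)
          (fun j => by rw [hadj i j]; omega)]
        simp only [hδv, h1]; norm_num
      · rw [sum_ind2 _ _ 3 5 (by omega) (by omega) (by omega)
          (fun j => by rw [hadj i j]; omega)]
        simp only [hδv, h1]; norm_num
      · rw [sum_ind3 _ _ 4 6 8 (by omega) (by omega) (by omega) (by omega) (by omega)
          (by omega) (fun j => by rw [hadj i j]; omega)]
        simp only [hδv, h1]; norm_num
      · rw [sum_ind2 _ _ 5 7 (by omega) (by omega) (by omega)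
          (fun j => by rw [hadj i j]; omega)]
        simp only [hδv, h1]; norm_num
      · rw [sum_ind1 _ _ 6 (by omega) (fun j => by rw [hadj i j]; omega)]
        simp only [hδv, h1]; norm_num
      · rw [sum_ind1 _ _ 5 (by omega) (fun j => by rw [hadj i j]; omega)]
        simp only [hδv, h1]; norm_num
    · -- type III*
      subst hN
      intro i
      have hc : i.val = 0 ∨ i.val = 1 ∨ i.val = 2 ∨ i.val = 3 ∨ i.val = 4 ∨ i.val = 5 ∨
          i.val = 6 ∨ i.val = 7 := by omega
      rcases hc with h1|h1|h1|h1|h1|h1|h1|h1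
      · rw [sum_ind1 _ _ 1 (by omega) (fun j => by rw [hadj i j]; omega)]
        simp only [hδv, h1]; norm_num
      · rw [sum_ind2 _ _ 0 2 (by omega) (by omega) (by omega)
          (fun j => by rw [hadj i j]; omega)]
        simp only [hδv, h1]; norm_num
      · rw [sum_ind2 _ _ 1 3 (by omega) (by omega) (by omega)
          (fun j => by rw [hadj i j]; omega)]
        simp only [hδv, h1]; norm_num
      · rw [sum_ind3 _ _ 2 4 7 (by omega) (by omega) (by omega) (by omega) (by omega)
          (by omega) (fun j => by rw [hadj i j]; omega)]
        simp only [hδv, h1]; norm_num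
      · rw [sum_ind2 _ _ 3 5 (by omega) (by omega) (by omega)
          (fun j => by rw [hadj i j]; omega)]
        simp only [hδv, h1]; norm_num
      · rw [sum_ind2 _ _ 4 6 (by omega) (by omega) (by omega)
          (fun j => by rw [hadj i j]; omega)]
        simp only [hδv, h1]; norm_num
      · rw [sum_ind1 _ _ 5 (by omega) (fun j => by rw [hadj i j]; omega)]
        simp only [hδv, h1]; norm_num
      · rw [sum_ind1 _ _ 3 (by omega) (fun j => by rw [hadj i j]; omega)]
        simp only [hδv, h1]; norm_num
    · -- type IV*
      subst hN
      intro i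
      have hc : i.val = 0 ∨ i.val = 1 ∨ i.val = 2 ∨ i.val = 3 ∨ i.val = 4 ∨ i.val = 5 ∨
          i.val = 6 := by omega
      rcases hc with h1|h1|h1|h1|h1|h1|h1
      · rw [sum_ind3 _ _ 1 3 5 (by omega) (by omega) (by omega) (by omega) (by omega)
          (by omega) (fun j => by rw [hadj i j]; omega)]
        simp only [hδv, h1]; norm_num
      · rw [sum_ind2 _ _ 0 2 (by omega) (by omega) (by omega)
          (fun j => by rw [hadj i j]; omega)]
        simp only [hδv, h1]; norm_num
      · rw [sum_ind1 _ _ 1 (by omega) (fun j => by rw [hadj i j]; omega)]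
        simp only [hδv, h1]; norm_num
      · rw [sum_ind2 _ _ 0 4 (by omega) (by omega) (by omega)
          (fun j => by rw [hadj i j]; omega)]
        simp only [hδv, h1]; norm_num
      · rw [sum_ind1 _ _ 3 (by omega) (fun j => by rw [hadj i j]; omega)]
        simp only [hδv, h1]; norm_num
      · rw [sum_ind2 _ _ 0 6 (by omega) (by omega) (by omega)
          (fun j => by rw [hadj i j]; omega)]
        simp only [hδv, h1]; norm_num
      · rw [sum_ind1 _ _ 5 (by omega) (fun j => by rw [hadj i j]; omega)]
        simp only [hδv, h1]; norm_num
  have hkey : ∀ i, M.mulVec (fun k => (δ k : ℝ)) i = ((w i : ℝ) + 2) * (δ i : ℝ) := by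
    intro i
    have e : ∀ j, M i j * (δ j : ℝ)
        = (if j = i then (w i : ℝ) * (δ j : ℝ) else 0)
          + (if G.Adj i j then (δ j : ℝ) else 0) := by
      intro j
      rcases eq_or_ne i j with rfl | h
      · simp [hMdef]
      · rw [hMdef]
        simp only [if_neg h, if_neg h.symm]
        split_ifs with ha <;> norm_num
    calc M.mulVec (fun k => (δ k : ℝ)) i = ∑ j, M i j * (δ j : ℝ) := by
          simp [Matrix.mulVec, dotProduct]
      _ = ∑ j, ((if j = i then (w i : ℝ) * (δ j : ℝ) else 0)
            + (if G.Adj i j then (δ j : ℝ) else 0)) :=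
          Finset.sum_congr rfl fun j _ => e j
      _ = (w i : ℝ) * (δ i : ℝ) + ∑ j, (if G.Adj i j then (δ j : ℝ) else 0) := by
          rw [Finset.sum_add_distrib]
          congr 1
          simp
      _ = ((w i : ℝ) + 2) * (δ i : ℝ) := by rw [hnsum i]; ring
  constructor
  · intro hw2
    have hM0 : M.mulVec (fun k => (δ k : ℝ)) = 0 := by
      funext i
      rw [hkey i, hw2 i]
      push_cast
      simp [Pi.zero_apply]
    exact ⟨fun x => form_nonpos M hsym hoff (fun k => (δ k : ℝ)) hδpos
      (fun i => by rw [hM0]; exact le_refl 0) x, hM0⟩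
  · rintro ⟨j, hj⟩ x hx
    have hMle : ∀ i, M.mulVec (fun k => (δ k : ℝ)) i ≤ 0 := by
      intro i
      rw [hkey i]
      have h2 : (w i : ℝ) ≤ -2 := by exact_mod_cast hw i
      nlinarith [hδpos i]
    have hMj : M.mulVec (fun k => (δ k : ℝ)) j < 0 := by
      rw [hkey j]
      have h2 : (w j : ℝ) < -2 := by exact_mod_cast hj
      exact mul_neg_of_neg_of_pos (by linarith) (hδpos j)
    exact form_neg G hT.isConnected.preconnected (fun i => (w i : ℝ))
      (fun k => (δ k : ℝ)) hδpos hMle j hMj x hx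
end

section
/- Let G be a finite simple tree graph on n ≤ 5 vertices with integer vertex weights w_i ≤ −2, and let M be the associated symmetric matrix (M_{ii} = w_i; M_{ij} = 1 if i, j adjacent, 0 otherwise for i ≠ j). If M is not negative definite, then n = 5, the graph G is a star (one vertex adjacent to each of the other four), and w_i = −2 for every vertex i. -/
/-!
Write `M = A + diag w` with `A` the adjacency matrix. For a positive vector `d`, the substitution
`x = d * y` (a ground-state transform) gives
`xᵀ M x = ∑ᵥ dᵥ yᵥ² (M d)ᵥ - ½ ∑_{u ∼ v} dᵤ dᵥ (yᵤ - yᵥ)²`,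
so on a connected graph `M` is negative definite as soon as `M d ≤ 0` with strict inequality
somewhere. Take `d = 1` on leaves and `d = 2` elsewhere, the null vector of the `I₀*` star.
In a tree the non-leaf neighbours of `v` have pairwise distinct further neighbours, so there are at
most `n - 1 - deg v` of them; for `n ≤ 5` this gives `∑_{u ∼ v} dᵤ ≤ 2 dᵥ`, hence `M d ≤ 0`.
If `M` is not negative definite, then `M d = 0`: every weight is `-2`, and summing over `v` gives
`0 = ∑ᵥ (deg v - 2) dᵥ = #leaves - 4`. Four leaves, each attached to a non-leaf, in a tree with
at most five vertices form the star.
-/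

open Matrix Finset

namespace SimpleGraph

lemma Preconnected.eq_of_forall_adj {V α : Type*} {G : SimpleGraph V} (hG : G.Preconnected)
    {f : V → α} (hf : ∀ u v, G.Adj u v → f u = f v) (u v : V) : f u = f v := by
  obtain ⟨p⟩ := hG u v
  induction p with
  | nil => rfl
  | cons h _ ih => exact (hf _ _ h).trans ih

lemma IsAcyclic.eq_of_adj_of_adj {V : Type*} {G : SimpleGraph V} (hG : G.IsAcyclic)
    {a b x y : V} (hab : a ≠ b) (hax : G.Adj a x) (hxb : G.Adj x b) (hay : G.Adj a y)
    (hyb : G.Adj y b) : x = y := by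
  have hp : (Walk.cons hax (Walk.cons hxb Walk.nil)).IsPath := by simp [hax.ne, hxb.ne, hab]
  have hq : (Walk.cons hay (Walk.cons hyb Walk.nil)).IsPath := by simp [hay.ne, hyb.ne, hab]
  simpa using congrArg (fun p : G.Path a b => p.1.support)
    ((hG.subsingleton_path a b).elim ⟨_, hp⟩ ⟨_, hq⟩)

lemma IsAcyclic.not_adj_of_adj_of_adj {V : Type*} {G : SimpleGraph V} (hG : G.IsAcyclic)
    {a b x : V} (hax : G.Adj a x) (hxb : G.Adj x b) : ¬ G.Adj a b := by
  intro hab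
  have hp : (Walk.cons hab Walk.nil).IsPath := by simp [hab.ne]
  have hq : (Walk.cons hax (Walk.cons hxb Walk.nil)).IsPath := by simp [hax.ne, hxb.ne, hab.ne]
  simpa using congrArg (fun p : G.Path a b => p.1.length)
    ((hG.subsingleton_path a b).elim ⟨_, hp⟩ ⟨_, hq⟩)

variable {V : Type*} [Fintype V] (G : SimpleGraph V) [DecidableRel G.Adj]

def leafWeight (v : V) : ℝ := if G.degree v = 1 then 1 else 2

lemma leafWeight_pos (v : V) : 0 < G.leafWeight v := by
  unfold leafWeight; split_ifs <;> norm_num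

lemma sum_sum_neighborFinset_eq_sum_degree_mul (f : V → ℝ) :
    ∑ v, ∑ u ∈ G.neighborFinset v, f u = ∑ u, G.degree u * f u := by
  simp_rw [G.degree_eq_sum_if_adj (R := ℝ), sum_mul, ite_mul, one_mul, zero_mul,
    neighborFinset_eq_filter, sum_filter]
  rw [Finset.sum_comm]
  simp_rw [G.adj_comm]

variable {G} in
theorem IsTree.sum_degree_sub_two_mul_leafWeight (hG : G.IsTree) :
    ∑ v, ((G.degree v : ℝ) - 2) * G.leafWeight v = #{v | G.degree v = 1} - 4 := by
  have hpt : ∀ v, ((G.degree v : ℝ) - 2) * G.leafWeight v =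
      2 * G.degree v - 4 + if G.degree v = 1 then 1 else 0 := fun v => by
    unfold leafWeight
    split_ifs with h
    · rw [h]; norm_num
    · ring
  have hE : (#G.edgeFinset : ℝ) + 1 = Fintype.card V := by exact_mod_cast hG.card_edgeFinset
  have hdeg : ∑ v, (G.degree v : ℝ) = 2 * #G.edgeFinset := by
    exact_mod_cast G.sum_degrees_eq_twice_card_edges
  simp only [hpt, sum_add_distrib, sum_sub_distrib, ← mul_sum, hdeg, sum_boole, sum_const,
    card_univ, nsmul_eq_mul]
  linarith

variable [DecidableEq V]

variable {G} in
theorem IsAcyclic.degree_add_card_filter_one_lt_degree_lt_card (hG : G.IsAcyclic) (v : V) :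
    G.degree v + #{u ∈ G.neighborFinset v | 1 < G.degree u} < Fintype.card V := by
  set S := {u ∈ G.neighborFinset v | 1 < G.degree u}
  have hex : ∀ u ∈ S, ∃ e, G.Adj u e ∧ e ≠ v := fun u hu => by
    have hdeg : 1 < #(G.neighborFinset u) := by
      rw [card_neighborFinset_eq_degree]; exact (mem_filter.mp hu).2
    obtain ⟨e, he, hne⟩ := exists_mem_ne hdeg v
    exact ⟨e, (mem_neighborFinset _ _ _).mp he, hne⟩
  choose! f hfadj hfne using hex
  have hSadj : ∀ u ∈ S, G.Adj v u := fun u hu => by simpa [S] using (mem_filter.mp hu).1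
  have hdisj : Disjoint (G.neighborFinset v) (S.image f) := by
    refine Finset.disjoint_left.mpr fun e he hfe => ?_
    obtain ⟨u, hu, rfl⟩ := mem_image.mp hfe
    exact hG.not_adj_of_adj_of_adj (hSadj u hu) (hfadj u hu) ((mem_neighborFinset _ _ _).mp he)
  have hinj : Set.InjOn f S := fun u₁ hu₁ u₂ hu₂ hf =>
    hG.eq_of_adj_of_adj (hfne u₁ hu₁).symm (hSadj u₁ hu₁) (hfadj u₁ hu₁) (hSadj u₂ hu₂)
      (hf ▸ hfadj u₂ hu₂)
  have hv : v ∉ G.neighborFinset v ∪ S.image f := by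
    simp only [mem_union, mem_neighborFinset, G.irrefl, false_or, mem_image, not_exists, not_and]
    exact fun u hu => hfne u hu
  calc G.degree v + #S < #(insert v (G.neighborFinset v ∪ S.image f)) := by
        rw [card_insert_of_notMem hv, card_union_of_disjoint hdisj, card_image_of_injOn hinj,
          card_neighborFinset_eq_degree]
        omega
    _ ≤ Fintype.card V := card_le_univ _

variable {G} in
theorem IsAcyclic.sum_leafWeight_le (hG : G.IsAcyclic) (hV : Fintype.card V ≤ 5) (v : V) :
    ∑ u ∈ G.neighborFinset v, G.leafWeight u ≤ 2 * G.leafWeight v := by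
  by_cases hv : G.degree v = 1
  · calc ∑ u ∈ G.neighborFinset v, G.leafWeight u ≤ ∑ u ∈ G.neighborFinset v, 2 :=
          sum_le_sum fun u _ => by unfold leafWeight; split_ifs <;> norm_num
      _ = 2 * G.leafWeight v := by simp [leafWeight, hv]
  · have hsplit : ∀ u ∈ G.neighborFinset v,
        G.leafWeight u = 1 + if 1 < G.degree u then 1 else 0 := fun u hu => by
      have : 0 < G.degree u := G.degree_pos_iff_exists_adj u |>.mpr
        ⟨v, ((G.mem_neighborFinset v u).mp hu).symm⟩
      unfold leafWeight
      split_ifs <;> first | omega | norm_num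
    have := hG.degree_add_card_filter_one_lt_degree_lt_card v
    rw [sum_congr rfl hsplit, sum_add_distrib, sum_boole]
    simp only [sum_const, card_neighborFinset_eq_degree, nsmul_eq_mul, mul_one, leafWeight, hv,
      if_false]
    exact_mod_cast (by omega : G.degree v + #{u ∈ G.neighborFinset v | 1 < G.degree u} ≤ 2 * 2)

variable {G} in
theorem IsTree.card_eq_five_and_exists_star_of_sum_leafWeight_eq (hG : G.IsTree)
    (hV : Fintype.card V ≤ 5)
    (h : ∀ v, ∑ u ∈ G.neighborFinset v, G.leafWeight u = 2 * G.leafWeight v) :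
    Fintype.card V = 5 ∧ ∃ c, ∀ v, v ≠ c → G.Adj c v := by
  set leaves : Finset V := {v | G.degree v = 1}
  have hleaves : #leaves = 4 := by
    have hzero : ∑ v, ((G.degree v : ℝ) - 2) * G.leafWeight v = 0 := by
      simp only [sub_mul, sum_sub_distrib, ← G.sum_sum_neighborFinset_eq_sum_degree_mul, h,
        ← mul_sum, sub_self]
    have := hG.sum_degree_sub_two_mul_leafWeight
    exact_mod_cast (by linarith : (#leaves : ℝ) = 4)
  have hmem : ∀ v, v ∈ leaves ↔ G.degree v = 1 := fun v => by simp [leaves]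
  have hleaf_adj : ∀ v ∈ leaves, ∀ u, G.Adj v u → u ∉ leaves := by
    intro v hv u hvu hu
    obtain ⟨a, ha⟩ := card_eq_one.mp ((G.card_neighborFinset_eq_degree v).trans ((hmem v).mp hv))
    have hua : u = a := mem_singleton.mp (ha ▸ (G.mem_neighborFinset v u).mpr hvu)
    have := h v
    simp only [ha, sum_singleton, leafWeight, ← hua, (hmem u).mp hu, (hmem v).mp hv] at this
    norm_num at this
  obtain ⟨ℓ, hℓ⟩ : leaves.Nonempty := card_pos.mp (by omega)
  obtain ⟨c, hℓc⟩ := (G.degree_pos_iff_exists_adj ℓ).mp (by rw [(hmem ℓ).mp hℓ]; omega)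
  have hsub : leaves ⊆ univ.erase c := fun v hv =>
    mem_erase.mpr ⟨fun hvc => hleaf_adj ℓ hℓ c hℓc (hvc ▸ hv), mem_univ v⟩
  have hcard := card_le_card hsub
  rw [card_erase_of_mem (mem_univ c), card_univ, hleaves] at hcard
  have heq : leaves = univ.erase c :=
    eq_of_subset_of_card_le hsub (by rw [card_erase_of_mem (mem_univ c), card_univ]; omega)
  refine ⟨by omega, c, fun v hv => ?_⟩
  have hvleaf : v ∈ leaves := heq ▸ mem_erase.mpr ⟨hv, mem_univ v⟩
  obtain ⟨u, hvu⟩ := (G.degree_pos_iff_exists_adj v).mp (by rw [(hmem v).mp hvleaf]; omega)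
  obtain rfl : u = c := by
    by_contra hne
    exact hleaf_adj v hvleaf u hvu (heq ▸ mem_erase.mpr ⟨hne, mem_univ u⟩)
  exact hvu.symm

lemma adjMatrix_add_diagonal_mulVec_apply (w x : V → ℝ) (v : V) :
    ((G.adjMatrix ℝ + diagonal w) *ᵥ x) v = ∑ u ∈ G.neighborFinset v, x u + w v * x v := by
  rw [add_mulVec, Pi.add_apply, adjMatrix_mulVec_apply, mulVec_diagonal]

theorem mul_dotProduct_adjMatrix_add_diagonal_mulVec_mul (w d y : V → ℝ) :
    (d * y) ⬝ᵥ (G.adjMatrix ℝ + diagonal w) *ᵥ (d * y) =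
      ∑ v, d v * y v ^ 2 * ((G.adjMatrix ℝ + diagonal w) *ᵥ d) v -
        (∑ u, ∑ v, if G.Adj u v then d u * d v * (y u - y v) ^ 2 else 0) / 2 := by
  set P := ∑ u, ∑ v, if G.Adj u v then d u * d v * (y u * y v) else 0
  set T := ∑ u, ∑ v, if G.Adj u v then d u * d v * y u ^ 2 else 0
  have hswap : (∑ u, ∑ v, if G.Adj u v then d u * d v * y v ^ 2 else 0) = T := by
    rw [Finset.sum_comm]
    simp_rw [G.adj_comm, mul_comm (d _) (d _)]
    rfl
  have hsq : (∑ u, ∑ v, if G.Adj u v then d u * d v * (y u - y v) ^ 2 else 0) =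
      T + T - 2 * P := by
    nth_rewrite 2 [← hswap]
    simp only [T, P, mul_sum, ← sum_add_distrib, ← sum_sub_distrib]
    refine sum_congr rfl fun u _ => sum_congr rfl fun v _ => ?_
    split_ifs <;> ring
  have hlhs : (d * y) ⬝ᵥ (G.adjMatrix ℝ + diagonal w) *ᵥ (d * y) =
      P + ∑ v, w v * d v ^ 2 * y v ^ 2 := by
    rw [add_mulVec, dotProduct_add, dotProduct_mulVec_adjMatrix]
    simp only [P, dotProduct, mulVec_diagonal, Pi.mul_apply]
    congr 1
    · refine sum_congr rfl fun u _ => sum_congr rfl fun v _ => ?_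
      split_ifs <;> ring
    · exact sum_congr rfl fun v _ => by ring
  have hrhs : ∑ v, d v * y v ^ 2 * ((G.adjMatrix ℝ + diagonal w) *ᵥ d) v =
      T + ∑ v, w v * d v ^ 2 * y v ^ 2 := by
    simp only [adjMatrix_add_diagonal_mulVec_apply, T, neighborFinset_eq_filter, sum_filter,
      mul_add, sum_add_distrib, mul_sum]
    congr 1
    · refine sum_congr rfl fun u _ => sum_congr rfl fun v _ => ?_
      split_ifs <;> ring
    · exact sum_congr rfl fun v _ => by ring
  rw [hlhs, hrhs, hsq]
  ring

theorem negDef_of_mulVec_nonpos_of_exists_neg (hG : G.Connected) {w d : V → ℝ}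
    (hd : ∀ v, 0 < d v) (hle : ∀ v, ((G.adjMatrix ℝ + diagonal w) *ᵥ d) v ≤ 0)
    (hlt : ∃ v, ((G.adjMatrix ℝ + diagonal w) *ᵥ d) v < 0) :
    ∀ x ≠ 0, x ⬝ᵥ (G.adjMatrix ℝ + diagonal w) *ᵥ x < 0 := by
  intro x hx
  set y : V → ℝ := fun v => x v / d v
  have hxy : x = d * y := funext fun v => by simp [y, mul_div_cancel₀ _ (hd v).ne']
  have hdiag : ∀ v ∈ univ, d v * y v ^ 2 * ((G.adjMatrix ℝ + diagonal w) *ᵥ d) v ≤ 0 :=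
    fun v _ => mul_nonpos_of_nonneg_of_nonpos (by have := hd v; positivity) (hle v)
  have hedge_term : ∀ u v, 0 ≤ if G.Adj u v then d u * d v * (y u - y v) ^ 2 else 0 := fun u v => by
    split_ifs
    · have := hd u; have := hd v; positivity
    · exact le_rfl
  have hedge : ∀ u ∈ univ, 0 ≤ ∑ v, if G.Adj u v then d u * d v * (y u - y v) ^ 2 else 0 :=
    fun u _ => sum_nonneg fun v _ => hedge_term u v
  rw [hxy, mul_dotProduct_adjMatrix_add_diagonal_mulVec_mul]
  by_contra! hQ
  have hdiag_sum := le_antisymm (sum_nonpos hdiag) (by linarith [sum_nonneg hedge])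
  have hedge_sum := le_antisymm (by linarith [sum_nonpos hdiag]) (sum_nonneg hedge)
  have hconst : ∀ u v, y u = y v := by
    refine hG.preconnected.eq_of_forall_adj fun u v huv => ?_
    have h := (sum_eq_zero_iff_of_nonneg fun v _ => hedge_term u v).mp
      ((sum_eq_zero_iff_of_nonneg hedge).mp hedge_sum u (mem_univ u)) v (mem_univ v)
    rw [if_pos huv] at h
    simpa [(hd u).ne', (hd v).ne', sub_eq_zero] using h
  obtain ⟨v₀, hv₀⟩ := hlt
  have hy₀ : y v₀ = 0 := by
    have := (sum_eq_zero_iff_of_nonpos hdiag).mp hdiag_sum v₀ (mem_univ v₀)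
    simpa [(hd v₀).ne', hv₀.ne] using this
  exact hx (hxy ▸ funext fun v => by simp [hconst v v₀, hy₀])

end SimpleGraph

open SimpleGraph

theorem small_tree_negDef_or_I0star_general (n : ℕ) (hn5 : n ≤ 5)
    (G : SimpleGraph (Fin n)) [DecidableRel G.Adj]
    (hT : G.IsTree) (w : Fin n → ℤ) (hw : ∀ i, w i ≤ -2)
    (hnotND : ¬ ∀ x : Fin n → ℝ, x ≠ 0 →
      x ⬝ᵥ (Matrix.mulVec
        (fun i j : Fin n => if i = j then (w i : ℝ) else if G.Adj i j then 1 else 0) x) < 0) :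
    n = 5 ∧ (∃ c : Fin n, ∀ v : Fin n, v ≠ c → G.Adj c v) ∧ (∀ i, w i = -2) := by
  set M := G.adjMatrix ℝ + diagonal (fun i => (w i : ℝ))
  have hM : (fun i j : Fin n => if i = j then (w i : ℝ) else if G.Adj i j then 1 else 0) = M := by
    ext i j
    by_cases h : i = j <;> simp [M, h, adjMatrix_apply]
  rw [hM] at hnotND
  have hV : Fintype.card (Fin n) ≤ 5 := by simpa using hn5
  have hMd := G.adjMatrix_add_diagonal_mulVec_apply (fun i => (w i : ℝ)) G.leafWeight
  have hsum := hT.isAcyclic.sum_leafWeight_le hV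
  have hle : ∀ v, (M *ᵥ G.leafWeight) v ≤ 0 := fun v => by
    have : (w v : ℝ) ≤ -2 := by exact_mod_cast hw v
    have := G.leafWeight_pos v
    nlinarith [hMd v, hsum v]
  have hzero : ∀ v, (M *ᵥ G.leafWeight) v = 0 := by
    by_contra! h
    obtain ⟨v, hv⟩ := h
    exact hnotND (G.negDef_of_mulVec_nonpos_of_exists_neg hT.connected G.leafWeight_pos hle
      ⟨v, (hle v).lt_of_ne hv⟩)
  have hw2 : ∀ i, w i = -2 := fun i => by
    by_contra hne
    have : (w i : ℝ) ≤ -3 := by exact_mod_cast (by have := hw i; omega : w i ≤ -3)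
    have := G.leafWeight_pos i
    nlinarith [hMd i, hsum i, hzero i]
  have harm : ∀ v, ∑ u ∈ G.neighborFinset v, G.leafWeight u = 2 * G.leafWeight v := fun v => by
    have := hMd v
    rw [hzero v, hw2 v] at this
    push_cast at this
    linarith
  obtain ⟨hcard, hstar⟩ := hT.card_eq_five_and_exists_star_of_sum_leafWeight_eq hV harm
  exact ⟨by simpa using hcard, hstar, hw2⟩

/-- a weighted tree on at most `5` vertices with all weights `≤ -2` whose
associated matrix is not negative definite must be the `I₀*` star with all weights `-2`. -/
theorem small_tree_negDef_or_I0star (n : ℕ) (hn1 : 1 ≤ n) (hn5 : n ≤ 5)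
    (G : SimpleGraph (Fin n)) [DecidableRel G.Adj]
    (hT : G.IsTree) (w : Fin n → ℤ) (hw : ∀ i, w i ≤ -2)
    (hnotND : ¬ ∀ x : Fin n → ℝ, x ≠ 0 →
      x ⬝ᵥ (Matrix.mulVec
        (fun i j : Fin n => if i = j then (w i : ℝ) else if G.Adj i j then 1 else 0) x) < 0) :
    n = 5 ∧ (∃ c : Fin n, ∀ v : Fin n, v ≠ c → G.Adj c v) ∧ (∀ i, w i = -2) :=
  small_tree_negDef_or_I0star_general n hn5 G hT w hw hnotND
end
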